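/- arXiv:2207.13945 — 11 statements merged into one kernel-verified Lean document; each statement's English description precedes it below -/
import Mathlib

section
/- Let r ≥ 2 and ℓ ≥ 1 be integers with gcd(r, ℓ) = 1, and set m = 2^r(2^ℓ + 1) and d = (m - 2)/2. Then gcd(d, 2^(2ℓ) - 1) = 1. -/
theorem gcd_d_one (r ℓ : ℕ) (hr : 2 ≤ r) (hℓ : 1 ≤ ℓ) (hgcd : Nat.gcd r ℓ = 1)
    (m d : ℕ) (hm : m = 2 ^ r * (2 ^ ℓ + 1)) (hd : d = (m - 2) / 2) :
    Nat.gcd d (2 ^ (2 * ℓ) - 1) = 1 := by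
  -- First compute d explicitly
  have hr1 : r = (r - 1) + 1 := by omega
  have hdval : d = 2 ^ (r - 1) * (2 ^ ℓ + 1) - 1 := by
    subst hm hd
    obtain ⟨u, hu⟩ : ∃ u, r = u + 1 := ⟨r - 1, by omega⟩
    subst hu
    simp only [Nat.add_sub_cancel]
    rw [pow_succ]
    have h2 : 2 ^ u * 2 * (2 ^ ℓ + 1) = 2 * (2 ^ u * (2 ^ ℓ + 1)) := by ring
    rw [h2]
    have h1 : 0 < 2 ^ u * (2 ^ ℓ + 1) := by positivity
    omega
  set g := Nat.gcd d (2 ^ (2 * ℓ) - 1) with hg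
  have hgd : g ∣ d := Nat.gcd_dvd_left _ _
  have hgN : g ∣ 2 ^ (2 * ℓ) - 1 := Nat.gcd_dvd_right _ _
  have h2l : (1 : ℕ) ≤ 2 ^ (2 * ℓ) := Nat.one_le_two_pow
  have hdge : (1 : ℕ) ≤ 2 ^ (r - 1) * (2 ^ ℓ + 1) :=
    Nat.one_le_iff_ne_zero.mpr (by positivity)
  -- Move to ℤ
  have hgd'' : (g : ℤ) ∣ 2 ^ (r - 1) * (2 ^ ℓ + 1) - 1 := by
    have h := Int.natCast_dvd_natCast.mpr hgd
    rw [hdval, Nat.cast_sub hdge] at h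
    convert h using 1
    push_cast; ring
  have hgN'' : (g : ℤ) ∣ 2 ^ (2 * ℓ) - 1 := by
    have h := Int.natCast_dvd_natCast.mpr hgN
    rw [Nat.cast_sub h2l] at h
    convert h using 1
    push_cast; ring
  -- g ∣ 2^ℓ - 1
  have hl : (g : ℤ) ∣ 2 ^ ℓ - 1 := by
    have key : (2 : ℤ) ^ ℓ - 1 =
        2 ^ (r - 1) * (2 ^ (2 * ℓ) - 1) - (2 ^ (r - 1) * (2 ^ ℓ + 1) - 1) * (2 ^ ℓ - 1) := by
      rw [two_mul, pow_add]; ring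
    rw [key]
    exact dvd_sub (hgN''.mul_left _) (hgd''.mul_right _)
  -- g ∣ 2^r - 1
  have hrd : (g : ℤ) ∣ 2 ^ r - 1 := by
    have key : (2 : ℤ) ^ r - 1 =
        (2 ^ (r - 1) * (2 ^ ℓ + 1) - 1) - 2 ^ (r - 1) * (2 ^ ℓ - 1) := by
      nth_rewrite 1 [hr1]
      rw [pow_succ]; ring
    rw [key]
    exact dvd_sub hgd'' (hl.mul_left _)
  -- work in ZMod g
  have hgpos : 0 < g := Nat.gcd_pos_of_pos_right _ (by
    have : (2:ℕ) ≤ 2 ^ (2 * ℓ) := by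
      calc (2:ℕ) = 2 ^ 1 := rfl
      _ ≤ 2 ^ (2 * ℓ) := Nat.pow_le_pow_right (by norm_num) (by omega)
    omega)
  haveI : NeZero g := ⟨hgpos.ne'⟩
  have h2r : (2 : ZMod g) ^ r = 1 := by
    have : ((2 ^ r - 1 : ℤ) : ZMod g) = 0 := (ZMod.intCast_zmod_eq_zero_iff_dvd _ _).mpr hrd
    push_cast at this
    linear_combination this
  have h2ℓ : (2 : ZMod g) ^ ℓ = 1 := by
    have : ((2 ^ ℓ - 1 : ℤ) : ZMod g) = 0 := (ZMod.intCast_zmod_eq_zero_iff_dvd _ _).mpr hl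
    push_cast at this
    linear_combination this
  have ho : orderOf (2 : ZMod g) ∣ Nat.gcd r ℓ :=
    Nat.dvd_gcd (orderOf_dvd_of_pow_eq_one h2r) (orderOf_dvd_of_pow_eq_one h2ℓ)
  rw [hgcd] at ho
  have h21 : (2 : ZMod g) = 1 := orderOf_eq_one_iff.mp (Nat.dvd_one.mp ho)
  have : ((1 : ℤ) : ZMod g) = 0 := by push_cast; linear_combination h21
  have := (ZMod.intCast_zmod_eq_zero_iff_dvd _ _).mp this
  exact Nat.dvd_one.mp (Int.ofNat_dvd.mp (by simpa using this))
end

section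
/- Let r ≥ 2 and ℓ ≥ 1 be integers with gcd(r, ℓ) = 2, and set m = 2^r(2^ℓ + 1) and d = (m - 2)/2. Then gcd(d, 2^(2ℓ) - 1) = 3. -/
/-! Since `x + 1` divides `k (x + 1)`, the number `k (x + 1) - 1` is coprime to `x + 1`, so its gcd
with `x ^ 2 - 1 = (x + 1)(x - 1)` is its gcd with `x - 1`; modulo `x - 1` it is `2k - 1`.
With `k = 2 ^ (r - 1)` and `x = 2 ^ ℓ` this gives `gcd (2 ^ r - 1) (2 ^ ℓ - 1) = 2 ^ gcd r ℓ - 1 = 3`. -/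

theorem Nat.gcd_mul_add_one_sub_one_sq_sub_one {k x : ℕ} (hk : 0 < k) (hx : 0 < x) :
    Nat.gcd (k * (x + 1) - 1) (x ^ 2 - 1) = Nat.gcd (2 * k - 1) (x - 1) := by
  set d := k * (x + 1) - 1 with hd
  have hd_succ : d + 1 = k * (x + 1) := by
    have : 1 ≤ k * (x + 1) := Nat.one_le_iff_ne_zero.mpr (by positivity)
    omega
  have hcop : Nat.Coprime (x + 1) d :=
    (Nat.coprime_self_add_right.mpr (Nat.coprime_one_right d)).symm.coprime_dvd_left
      (hd_succ ▸ dvd_mul_left _ _)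
  have hd_mod : d = (2 * k - 1) + k * (x - 1) := by
    have : k * (x - 1) + 2 * k = k * (x + 1) := by
      rw [show x + 1 = x - 1 + 2 by omega]
      ring
    omega
  rw [show x ^ 2 - 1 = (x + 1) * (x - 1) by simpa using Nat.sq_sub_sq x 1,
    hcop.gcd_mul_left_cancel_right, hd_mod, Nat.gcd_add_mul_right_left]

theorem gcd_d_three_general (r ℓ : ℕ) (hr : 2 ≤ r) (hgcd : Nat.gcd r ℓ = 2)
    (m d : ℕ) (hm : m = 2 ^ r * (2 ^ ℓ + 1)) (hd : d = (m - 2) / 2) :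
    Nat.gcd d (2 ^ (2 * ℓ) - 1) = 3 := by
  have h_two_pow : 2 ^ r = 2 * 2 ^ (r - 1) := by
    rw [← pow_succ']; congr 1; omega
  have hd' : d = 2 ^ (r - 1) * (2 ^ ℓ + 1) - 1 := by
    have : 1 ≤ 2 ^ (r - 1) * (2 ^ ℓ + 1) := Nat.one_le_iff_ne_zero.mpr (by positivity)
    rw [hd, hm, h_two_pow, mul_assoc]
    omega
  rw [hd', mul_comm 2 ℓ, pow_mul,
    Nat.gcd_mul_add_one_sub_one_sq_sub_one (by positivity) (by positivity), ← h_two_pow,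
    Nat.pow_sub_one_gcd_pow_sub_one, hgcd]
  rfl

theorem gcd_d_three (r ℓ : ℕ) (hr : 2 ≤ r) (hℓ : 1 ≤ ℓ) (hgcd : Nat.gcd r ℓ = 2)
    (m d : ℕ) (hm : m = 2 ^ r * (2 ^ ℓ + 1)) (hd : d = (m - 2) / 2) :
    Nat.gcd d (2 ^ (2 * ℓ) - 1) = 3 :=
  gcd_d_three_general r ℓ hr hgcd m d hm hd
end

section
/- Let q = 2^n and let m be a positive integer with m ≡ 0 (mod 4). For every polynomial f ∈ 𝔽_q[x] of degree m and every nonzero α ∈ 𝔽_q, there exists a unique polynomial L ∈ 𝔽_q[x] of degree at most (m-2)/2 such that L(x(x+α)) = f(x+α) + f(x) as polynomials in 𝔽_q[x]. -/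
/-!
Let `τ = taylor α` be the shift `p ↦ p(X + α)`. In characteristic 2, `τ` is an involution,
so `τ f + f` is `τ`-invariant, and so is `g = X (X + α)`. When a `τ`-invariant polynomial is
divided by the monic `g`, uniqueness of division makes the quotient and remainder `τ`-invariant
as well, and an invariant polynomial of degree at most one is constant because `α ≠ 0`.
Induction on the degree therefore writes every invariant polynomial as `L(g)`, and `L` is unique
because composition with `g` is injective. Since `τ f + f` has degree below `m` and
`deg L(g) = 2 deg L`, we get `deg L ≤ (m - 2) / 2` for even `m`.
-/

open Polynomial

namespace Polynomial

section CommRing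

variable {R : Type*} [CommRing R]

theorem natDegree_X_mul_X_add_C [Nontrivial R] (α : R) : (X * (X + C α)).natDegree = 2 := by
  rw [monic_X.natDegree_mul (monic_X_add_C α), natDegree_X, natDegree_X_add_C]

theorem natDegree_taylor_sub_le (α : R) (f : R[X]) :
    (taylor α f - f).natDegree ≤ f.natDegree - 1 := by
  refine natDegree_le_pred ((natDegree_sub_le _ _).trans (by rw [natDegree_taylor, max_self])) ?_
  rw [coeff_sub, coeff_taylor_natDegree, leadingCoeff, sub_self]

theorem taylor_divByMonic_modByMonic_eq_self {α : R} {p q : R[X]} (hq : q.Monic)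
    (hqα : taylor α q = q) (hpα : taylor α p = p) :
    taylor α (p /ₘ q) = p /ₘ q ∧ taylor α (p %ₘ q) = p %ₘ q := by
  nontriviality R
  have hdecomp : taylor α (p %ₘ q) + q * taylor α (p /ₘ q) = p := by
    conv_rhs => rw [← hpα, ← modByMonic_add_div p q]
    rw [map_add, taylor_mul, hqα]
  have hdeg : (taylor α (p %ₘ q)).degree < q.degree := by
    rw [degree_taylor]
    exact degree_modByMonic_lt p hq
  obtain ⟨hdiv, hmod⟩ := div_modByMonic_unique _ _ hq ⟨hdecomp, hdeg⟩
  exact ⟨hdiv.symm, hmod.symm⟩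

variable [NoZeroDivisors R]

theorem eq_C_of_taylor_eq_self_of_natDegree_le_one {α : R} (hα : α ≠ 0) {p : R[X]}
    (hp : p.natDegree ≤ 1) (hpα : taylor α p = p) : p = C (p.coeff 0) := by
  obtain ⟨a, b, rfl⟩ := exists_eq_X_add_C_of_natDegree_le_one hp
  have hcoeff := congrArg (coeff · 0) hpα
  simp only [taylor_coeff_zero, eval_add, eval_mul, eval_C, eval_X, coeff_add, coeff_C_mul,
    coeff_X_zero, mul_zero, coeff_C_zero, zero_add, add_eq_right, mul_eq_zero, hα, or_false]
    at hcoeff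
  simp [hcoeff]

theorem comp_left_injective {g : R[X]} (hg : g.natDegree ≠ 0) :
    Function.Injective fun L : R[X] ↦ L.comp g := by
  intro L₁ L₂ h
  rw [← sub_eq_zero]
  have hsub : (L₁ - L₂).comp g = 0 := by rw [sub_comp, sub_eq_zero]; exact h
  rcases comp_eq_zero_iff.mp hsub with hzero | ⟨-, hconst⟩
  · exact hzero
  · exact absurd (by rw [hconst, natDegree_C]) hg

end CommRing

section CharTwo

variable {R : Type*} [CommRing R] [CharP R 2]

theorem taylor_taylor_self (α : R) (f : R[X]) : taylor α (taylor α f) = f := by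
  rw [taylor_taylor, CharTwo.add_self_eq_zero, taylor_zero]

theorem taylor_X_mul_X_add_C (α : R) : taylor α (X * (X + C α)) = X * (X + C α) := by
  rw [taylor_mul, taylor_X, ← taylor_X, taylor_taylor_self, mul_comm]

theorem taylor_taylor_sub_self (α : R) (f : R[X]) :
    taylor α (taylor α f - f) = taylor α f - f := by
  rw [map_sub, taylor_taylor_self, CharTwo.sub_eq_add, CharTwo.sub_eq_add, add_comm]

variable [NoZeroDivisors R]

theorem exists_comp_X_mul_X_add_C_eq {α : R} (hα : α ≠ 0) (p : R[X]) (hpα : taylor α p = p) :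
    ∃ L : R[X], L.comp (X * (X + C α)) = p := by
  nontriviality R
  induction p using degree_lt_wf.induction with
  | _ p ih =>
    have hg : (X * (X + C α) : R[X]).Monic := monic_X.mul (monic_X_add_C α)
    by_cases hp : p = 0
    · exact ⟨0, by rw [hp, zero_comp]⟩
    obtain ⟨hdiv, hmod⟩ :=
      taylor_divByMonic_modByMonic_eq_self hg (taylor_X_mul_X_add_C α) hpα
    have hmod_deg : (p %ₘ (X * (X + C α))).natDegree ≤ 1 := by
      have hg_ne_one : X * (X + C α) ≠ 1 := fun h ↦ by
        simpa [h] using natDegree_X_mul_X_add_C α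
      have := natDegree_modByMonic_lt p hg hg_ne_one
      rw [natDegree_X_mul_X_add_C] at this
      omega
    have hmod_C := eq_C_of_taylor_eq_self_of_natDegree_le_one hα hmod_deg hmod
    have hdiv_lt := degree_divByMonic_lt p _ hp <| by
      rw [degree_eq_natDegree hg.ne_zero, natDegree_X_mul_X_add_C]; simp
    obtain ⟨L, hL⟩ := ih _ hdiv_lt hdiv
    refine ⟨C ((p %ₘ (X * (X + C α))).coeff 0) + X * L, ?_⟩
    rw [add_comp, C_comp, mul_comp, X_comp, hL, ← hmod_C, modByMonic_add_div]

end CharTwo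

end Polynomial

theorem exists_unique_Lalpha_general (n m : ℕ) (hm4 : m % 4 = 0)
    (f : Polynomial (GaloisField 2 n)) (hf : f.natDegree = m)
    (α : GaloisField 2 n) (hα : α ≠ 0) :
    ∃! L : Polynomial (GaloisField 2 n),
      L.natDegree ≤ (m - 2) / 2 ∧
        L.comp (X * (X + C α)) = f.comp (X + C α) + f := by
  rw [← taylor_apply, ← CharTwo.sub_eq_add (taylor α f)]
  obtain ⟨L, hL⟩ := exists_comp_X_mul_X_add_C_eq hα _ (taylor_taylor_sub_self α f)
  have hL_deg : L.natDegree * 2 ≤ m - 1 :=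
    calc L.natDegree * 2 = (L.comp (X * (X + C α))).natDegree := by
          rw [natDegree_comp, natDegree_X_mul_X_add_C]
      _ ≤ m - 1 := hL ▸ hf ▸ natDegree_taylor_sub_le α f
  refine ⟨L, ⟨by omega, hL⟩, fun L' hL' ↦ comp_left_injective ?_ (hL'.2.trans hL.symm)⟩
  rw [natDegree_X_mul_X_add_C]
  exact two_ne_zero

theorem exists_unique_Lalpha (n m : ℕ) (hn : 0 < n) (hm : 0 < m) (hm4 : m % 4 = 0)
    (f : Polynomial (GaloisField 2 n)) (hf : f.natDegree = m)
    (α : GaloisField 2 n) (hα : α ≠ 0) :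
    ∃! L : Polynomial (GaloisField 2 n),
      L.natDegree ≤ (m - 2) / 2 ∧
        L.comp (X * (X + C α)) = f.comp (X + C α) + f :=
  exists_unique_Lalpha_general n m hm4 f hf α hα
end

section
/- Let q = 2^n, let m ≡ 0 (mod 4), let f = Σ_{k=0}^{m} a_{m-k} x^k ∈ 𝔽_q[x] with a_0 ≠ 0, and let α ∈ 𝔽_q be nonzero. Let L_α f be the unique polynomial of degree at most d = (m-2)/2 with (L_α f)(x(x+α)) = f(x+α) + f(x). Then L_α f has degree exactly d if and only if a_1 ≠ 0. -/
/-!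
Write `m = 4t + 4`, so `d = 2t + 1` and `m - 2 = 2d`. Since `x(x + α)` is monic of degree 2, the
coefficient of `x^(2d)` in `L(x(x + α))` is the coefficient of `x^d` in `L`. On the other side, by
Taylor expansion the coefficient of `x^(m-2)` in `f(x + α) + f(x)` is
`(m - 1) α a₁ + binom(m, 2) α² a₀`, and in characteristic 2 with `4 ∣ m` this is `α a₁`.
-/

open Polynomial

section Semiring

variable {R : Type*} [Semiring R]

theorem coeff_comp_mul_natDegree_of_monic {p q : R[X]} (hq : q.Monic) (hq0 : q.natDegree ≠ 0)
    {d : ℕ} (hp : p.natDegree ≤ d) : (p.comp q).coeff (d * q.natDegree) = p.coeff d := by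
  rcases hp.lt_or_eq with hlt | rfl
  · rw [coeff_eq_zero_of_natDegree_lt hlt, coeff_eq_zero_of_natDegree_lt]
    exact natDegree_comp_le.trans_lt (Nat.mul_lt_mul_of_pos_right hlt (Nat.pos_of_ne_zero hq0))
  · rw [coeff_comp_degree_mul_degree hq0, hq.leadingCoeff, one_pow, mul_one, coeff_natDegree]

theorem taylor_coeff_of_natDegree_le {f : R[X]} {k : ℕ} (hf : f.natDegree ≤ k + 2) (r : R) :
    (taylor r f).coeff k =
      f.coeff k + (k + 1 : ℕ) * f.coeff (k + 1) * r +
        ((k + 2).choose 2) * f.coeff (k + 2) * r ^ 2 := by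
  have hlt : (hasseDeriv k f).natDegree < 3 := (natDegree_hasseDeriv_le f k).trans_lt (by omega)
  rw [taylor_coeff, eval_eq_sum_range' hlt, Finset.sum_range_succ, Finset.sum_range_succ,
    Finset.sum_range_one, hasseDeriv_coeff, hasseDeriv_coeff, hasseDeriv_coeff, zero_add,
    Nat.choose_self, add_comm 1 k, add_comm 2 k, Nat.choose_symm_add, Nat.choose_symm_add,
    Nat.choose_one_right]
  simp

end Semiring

theorem coeff_comp_X_add_C_add_self_of_charTwo {R : Type*} [CommRing R] [CharP R 2] {f : R[X]}
    {t : ℕ} (hf : f.natDegree ≤ 4 * t + 4) (r : R) :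
    (f.comp (X + C r) + f).coeff (4 * t + 2) = r * f.coeff (4 * t + 3) := by
  have hodd : ((4 * t + 2 + 1 : ℕ) : R) = 1 := by
    rw [show 4 * t + 2 + 1 = 2 * (2 * t + 1) + 1 by ring]
    push_cast
    rw [CharTwo.two_eq_zero, zero_mul, zero_add]
  have heven : (((4 * t + 2 + 2).choose 2 : ℕ) : R) = 0 := by
    rw [CharP.cast_eq_zero_iff R 2, Nat.choose_two_right,
      show (4 * t + 2 + 2) * (4 * t + 2 + 2 - 1) = 2 * (2 * ((t + 1) * (4 * t + 3))) by
        rw [show 4 * t + 2 + 2 - 1 = 4 * t + 3 by omega]; ring,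
      Nat.mul_div_cancel_left _ two_pos]
    exact dvd_mul_right 2 _
  rw [coeff_add, ← taylor_apply, taylor_coeff_of_natDegree_le hf, hodd, heven]
  linear_combination CharTwo.add_self_eq_zero (f.coeff (4 * t + 2))

theorem Lalpha_degree_iff_general (n m : ℕ) (hm : 0 < m) (hm4 : m % 4 = 0)
    (f : Polynomial (GaloisField 2 n)) (hf : f.natDegree = m)
    (α : GaloisField 2 n) (hα : α ≠ 0)
    (L : Polynomial (GaloisField 2 n)) (hdeg : L.natDegree ≤ (m - 2) / 2)
    (hcomp : L.comp (X * (X + C α)) = f.comp (X + C α) + f) :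
    L.natDegree = (m - 2) / 2 ↔ f.coeff (m - 1) ≠ 0 := by
  obtain ⟨t, rfl⟩ : ∃ t, m = 4 * t + 4 := ⟨m / 4 - 1, by omega⟩
  rw [show (4 * t + 4 - 2) / 2 = 2 * t + 1 by omega] at hdeg ⊢
  rw [show 4 * t + 4 - 1 = 4 * t + 3 by omega]
  have hmonic : (X * (X + C α)).Monic := monic_X.mul (monic_X_add_C α)
  have hquad : (X * (X + C α)).natDegree = 2 := by
    rw [monic_X.natDegree_mul (monic_X_add_C α), natDegree_X, natDegree_X_add_C]
  have hcoeff : L.coeff (2 * t + 1) = α * f.coeff (4 * t + 3) := by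
    rw [← coeff_comp_mul_natDegree_of_monic hmonic (by omega) hdeg, hquad, hcomp,
      show (2 * t + 1) * 2 = 4 * t + 2 by ring]
    exact coeff_comp_X_add_C_add_self_of_charTwo hf.le α
  rw [← mul_ne_zero_iff_left hα, ← hcoeff]
  refine ⟨fun hL => ?_, natDegree_eq_of_le_of_coeff_ne_zero hdeg⟩
  rw [← hL, coeff_natDegree, Ne, leadingCoeff_eq_zero]
  rintro rfl
  simp at hL

theorem Lalpha_degree_iff (n m : ℕ) (hn : 0 < n) (hm : 0 < m) (hm4 : m % 4 = 0)
    (f : Polynomial (GaloisField 2 n)) (hf : f.natDegree = m)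
    (α : GaloisField 2 n) (hα : α ≠ 0)
    (L : Polynomial (GaloisField 2 n)) (hdeg : L.natDegree ≤ (m - 2) / 2)
    (hcomp : L.comp (X * (X + C α)) = f.comp (X + C α) + f) :
    L.natDegree = (m - 2) / 2 ↔ f.coeff (m - 1) ≠ 0 :=
  Lalpha_degree_iff_general n m hm hm4 f hf α hα L hdeg hcomp
end

section
/- Let q = 2^n and let m = 2^r(2^ℓ+1) with r ≥ 2 and ℓ ≥ 1. For every nonzero α ∈ 𝔽_q, the polynomial α^m + Σ_{k=0}^{ℓ-1} α^(m - 2^(r+k+1)) x^(2^(r+k)) composed with x(x+α) equals x^m + (x+α)^m in 𝔽_q[x]. -/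
open Polynomial

lemma nat_sub_aux (A B C : ℕ) (h1 : C = B + B) (h2 : C ≤ A) :
    (A + 1 - C) + B = A + 1 - B := by omega

lemma key_char2 {R : Type*} [CommRing R] [CharP R 2] (u a : R) (ℓ : ℕ) (hℓ : 1 ≤ ℓ) :
    a ^ (2 ^ ℓ + 1) + ∑ k ∈ Finset.range ℓ,
        a ^ (2 ^ ℓ + 1 - 2 ^ (k + 1)) * (u * (u + a)) ^ 2 ^ k
      = u ^ (2 ^ ℓ + 1) + (u + a) ^ (2 ^ ℓ + 1) := by
  have h2 : (2 : R) = 0 := CharP.cast_eq_zero R 2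
  set f : ℕ → R := fun j => a ^ (2 ^ ℓ + 1 - 2 ^ j) * u ^ 2 ^ j with hf
  have hterm : ∀ k ∈ Finset.range ℓ, a ^ (2 ^ ℓ + 1 - 2 ^ (k + 1)) * (u * (u + a)) ^ 2 ^ k
      = f (k + 1) - f k := by
    intro k hk
    simp only [Finset.mem_range] at hk
    have hle : 2 ^ (k + 1) ≤ 2 ^ ℓ := Nat.pow_le_pow_right (by norm_num) (by omega)
    have h2k : (2:ℕ) ^ (k + 1) = 2 ^ k + 2 ^ k := by rw [pow_succ, mul_two]
    have hu2 : u ^ 2 ^ (k + 1) = u ^ 2 ^ k * u ^ 2 ^ k := by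
      rw [h2k, pow_add]
    have ha2 : a ^ (2 ^ ℓ + 1 - 2 ^ (k + 1)) * a ^ 2 ^ k = a ^ (2 ^ ℓ + 1 - 2 ^ k) := by
      rw [← pow_add]; congr 1; exact nat_sub_aux _ _ _ h2k hle
    rw [CharTwo.sub_eq_add, hf]
    simp only []
    rw [mul_pow, add_pow_char_pow, hu2, ← ha2]
    ring
  rw [Finset.sum_congr rfl hterm, Finset.sum_range_sub f ℓ]
  have hone : 1 ≤ 2 ^ ℓ := Nat.one_le_two_pow
  have h1 : 2 ^ ℓ + 1 - 2 ^ ℓ = 1 := by omega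
  have h2' : 2 ^ ℓ + 1 - 2 ^ 0 = 2 ^ ℓ := by
    rw [pow_zero]; omega
  have h2'' : 2 ^ ℓ + 1 - 1 = 2 ^ ℓ := by omega
  rw [hf]
  simp only [h1, h2', h2'', pow_zero, pow_one]
  have hpow : (u + a) ^ (2 ^ ℓ + 1) = (u ^ 2 ^ ℓ + a ^ 2 ^ ℓ) * (u + a) := by
    rw [pow_succ, add_pow_char_pow]
  have hpow2 : u ^ (2 ^ ℓ + 1) = u ^ 2 ^ ℓ * u := by rw [pow_succ]
  have hpow3 : a ^ (2 ^ ℓ + 1) = a ^ 2 ^ ℓ * a := by rw [pow_succ]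
  rw [hpow, hpow2, hpow3]
  linear_combination (-(u ^ (2 ^ ℓ) * u) - a ^ (2 ^ ℓ) * u) * h2

theorem Lalpha_of_monomial (n r ℓ : ℕ) (hn : 0 < n) (hr : 2 ≤ r) (hℓ : 1 ≤ ℓ)
    (m : ℕ) (hm : m = 2 ^ r * (2 ^ ℓ + 1))
    (α : GaloisField 2 n) (hα : α ≠ 0) :
    (C (α ^ m) + ∑ k ∈ Finset.range ℓ,
        C (α ^ (m - 2 ^ (r + k + 1))) * X ^ 2 ^ (r + k)).comp (X * (X + C α)) =
      X ^ m + (X + C α) ^ m := by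
  simp only [add_comp, Polynomial.sum_comp, mul_comp, pow_comp, C_comp, X_comp]
  set u : (GaloisField 2 n)[X] := X ^ 2 ^ r with hu
  set a : (GaloisField 2 n)[X] := C α ^ 2 ^ r with ha
  have hXa : (X + C α) ^ 2 ^ r = u + a := by rw [add_pow_char_pow, hu, ha]
  have hCm : C (α ^ m) = a ^ (2 ^ ℓ + 1) := by
    rw [map_pow, ha, ← pow_mul, ← hm]
  have hsum : ∀ k ∈ Finset.range ℓ,
      C (α ^ (m - 2 ^ (r + k + 1))) * (X * (X + C α)) ^ 2 ^ (r + k)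
        = a ^ (2 ^ ℓ + 1 - 2 ^ (k + 1)) * (u * (u + a)) ^ 2 ^ k := by
    intro k hk
    simp only [Finset.mem_range] at hk
    have hle : 2 ^ (k + 1) ≤ 2 ^ ℓ := Nat.pow_le_pow_right (by norm_num) (by omega)
    have he : m - 2 ^ (r + k + 1) = 2 ^ r * (2 ^ ℓ + 1 - 2 ^ (k + 1)) := by
      have h1 : (2:ℕ) ^ (r + k + 1) = 2 ^ r * 2 ^ (k + 1) := by
        rw [← pow_add, Nat.add_assoc]
      rw [hm, h1, ← Nat.mul_sub]
    have hP : (X * (X + C α)) ^ 2 ^ (r + k) = (u * (u + a)) ^ 2 ^ k := by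
      have : (2:ℕ) ^ (r + k) = 2 ^ r * 2 ^ k := by rw [← pow_add]
      rw [this, pow_mul, mul_pow, hXa, hu]
      
    have hC : C (α ^ (m - 2 ^ (r + k + 1))) = a ^ (2 ^ ℓ + 1 - 2 ^ (k + 1)) := by
      rw [he, map_pow, ha, ← pow_mul]
    rw [hC, hP]
  rw [Finset.sum_congr rfl hsum, hCm]
  have hXm : (X : (GaloisField 2 n)[X]) ^ m = u ^ (2 ^ ℓ + 1) := by
    rw [hu, ← pow_mul, ← hm]
  have hXam : (X + C α) ^ m = (u + a) ^ (2 ^ ℓ + 1) := by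
    rw [hm, pow_mul, hXa]
  rw [hXm, hXam]
  exact key_char2 u a ℓ hℓ
end

section
/- Let q = 2^n, let m ≡ 0 (mod 8), and let f = Σ_{k=0}^m a_{m-k} x^k ∈ 𝔽_q[x] have degree m with a_1 ≠ 0. Write L_α f = Σ_{k=0}^d b_{d-k} x^k with d = (m-2)/2. Then b_0 = a_1 α and b_1 = a_2 α² + a_3 α. -/
open Polynomial

lemma coeff_comp_eq_sum {R : Type*} [CommSemiring R] (P q : R[X]) {N : ℕ}
    (h : P.natDegree < N) (k : ℕ) :
    (P.comp q).coeff k = ∑ e ∈ Finset.range N, P.coeff e * (q ^ e).coeff k := by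
  rw [Polynomial.comp, Polynomial.eval₂_eq_sum_range' C h q, Polynomial.finset_sum_coeff]
  simp [Polynomial.coeff_C_mul]

lemma coeff_q_pow {R : Type*} [CommSemiring R] (α : R) (e k : ℕ) :
    ((X * (X + C α)) ^ e).coeff k =
      if e ≤ k then α ^ (e - (k - e)) * (e.choose (k - e) : R) else 0 := by
  rw [mul_pow, mul_comm, Polynomial.coeff_mul_X_pow', Polynomial.coeff_X_add_C_pow]

lemma cast_eq_mod_two {R : Type*} [NonAssocSemiring R] [CharP R 2] (k : ℕ) :
    ((k : ℕ) : R) = ((k % 2 : ℕ) : R) := by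
  conv_lhs => rw [← Nat.mod_add_div k 2]
  rw [Nat.cast_add, Nat.cast_mul, CharP.cast_eq_zero R 2, zero_mul, add_zero]

lemma choose_mod_two (n k : ℕ) :
    n.choose k % 2 = ((n % 2).choose (k % 2) * ((n / 2).choose (k / 2))) % 2 :=
  @Choose.choose_modEq_choose_mod_mul_choose_div_nat n k 2 ⟨Nat.prime_two⟩


lemma sum_range_add_two {M : Type*} [AddCommMonoid M] (g : ℕ → M) (N : ℕ) :
    ∑ e ∈ Finset.range (N+2), g e
      = (∑ e ∈ Finset.range N, g e) + g N + g (N+1) := by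
  rw [show N+2 = N+1+1 from rfl, Finset.sum_range_succ, Finset.sum_range_succ]

lemma sum_range_add_three {M : Type*} [AddCommMonoid M] (g : ℕ → M) (N : ℕ) :
    ∑ e ∈ Finset.range (N+3), g e
      = (∑ e ∈ Finset.range N, g e) + g N + g (N+1) + g (N+2) := by
  rw [show N+3 = N+2+1 from rfl, Finset.sum_range_succ, sum_range_add_two]

lemma sum_range_add_five {M : Type*} [AddCommMonoid M] (g : ℕ → M) (N : ℕ) :
    ∑ e ∈ Finset.range (N+5), g e
      = (∑ e ∈ Finset.range N, g e) + g N + g (N+1) + g (N+2) + g (N+3) + g (N+4) := by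
  rw [show N+5 = N+3+1+1 from rfl, Finset.sum_range_succ, Finset.sum_range_succ,
    sum_range_add_three]

theorem Lalpha_top_coeffs_mod8 (n m : ℕ) (hn : 0 < n) (hm : 0 < m) (hm8 : m % 8 = 0)
    (f : Polynomial (GaloisField 2 n)) (hf : f.natDegree = m)
    (ha1 : f.coeff (m - 1) ≠ 0)
    (α : GaloisField 2 n) (hα : α ≠ 0)
    (d : ℕ) (hd : d = (m - 2) / 2)
    (L : Polynomial (GaloisField 2 n)) (hdeg : L.natDegree ≤ d)
    (hcomp : L.comp (X * (X + C α)) = f.comp (X + C α) + f) :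
    L.coeff d = f.coeff (m - 1) * α ∧
      L.coeff (d - 1) = f.coeff (m - 2) * α ^ 2 + f.coeff (m - 3) * α := by
  obtain ⟨u, rfl⟩ : ∃ u, m = 8*u+8 := ⟨m/8 - 1, by omega⟩
  have hd3 : d = 4*u+3 := by omega
  subst hd3
  have htwo : ((2:ℕ) : GaloisField 2 n) = 0 := CharP.cast_eq_zero _ 2
  -- parity facts
  have h1 : (8*u+7).choose (8*u+6) % 2 = 1 := by
    rw [choose_mod_two (8*u+7) (8*u+6),
      show (8*u+7) % 2 = 1 from by omega, show (8*u+6) % 2 = 0 from by omega,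
      show (8*u+7) / 2 = 4*u+3 from by omega, show (8*u+6) / 2 = 4*u+3 from by omega]
    simp only [Nat.choose_self, Nat.choose_zero_right, Nat.choose_one_right, one_mul]
    all_goals simp
  have h2 : (8*u+8).choose (8*u+6) % 2 = 0 := by
    rw [choose_mod_two (8*u+8) (8*u+6),
      show (8*u+8) % 2 = 0 from by omega, show (8*u+6) % 2 = 0 from by omega,
      show (8*u+8) / 2 = 4*u+4 from by omega, show (8*u+6) / 2 = 4*u+3 from by omega]
    simp only [Nat.choose_self, Nat.choose_zero_right, Nat.choose_one_right, one_mul]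
    rw [choose_mod_two (4*u+4) (4*u+3),
      show (4*u+4) % 2 = 0 from by omega, show (4*u+3) % 2 = 1 from by omega,
      show (4*u+4) / 2 = 2*u+2 from by omega, show (4*u+3) / 2 = 2*u+1 from by omega]
    simp only [Nat.choose_self, Nat.choose_zero_right, Nat.choose_one_right, one_mul]
    all_goals simp [Nat.choose]
  have h3 : (4*u+3).choose (4*u+1) % 2 = 1 := by
    rw [choose_mod_two (4*u+3) (4*u+1),
      show (4*u+3) % 2 = 1 from by omega, show (4*u+1) % 2 = 1 from by omega,
      show (4*u+3) / 2 = 2*u+1 from by omega, show (4*u+1) / 2 = 2*u from by omega]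
    simp only [Nat.choose_self, Nat.choose_zero_right, Nat.choose_one_right, one_mul]
    rw [choose_mod_two (2*u+1) (2*u),
      show (2*u+1) % 2 = 1 from by omega, show (2*u) % 2 = 0 from by omega,
      show (2*u+1) / 2 = u from by omega, show (2*u) / 2 = u from by omega]
    simp only [Nat.choose_self, Nat.choose_zero_right, Nat.choose_one_right, one_mul]
    all_goals simp
  have h4 : (8*u+5).choose (8*u+4) % 2 = 1 := by
    rw [choose_mod_two (8*u+5) (8*u+4),
      show (8*u+5) % 2 = 1 from by omega, show (8*u+4) % 2 = 0 from by omega,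
      show (8*u+5) / 2 = 4*u+2 from by omega, show (8*u+4) / 2 = 4*u+2 from by omega]
    simp only [Nat.choose_self, Nat.choose_zero_right, Nat.choose_one_right, one_mul]
    all_goals simp
  have h5 : (8*u+6).choose (8*u+4) % 2 = 1 := by
    rw [choose_mod_two (8*u+6) (8*u+4),
      show (8*u+6) % 2 = 0 from by omega, show (8*u+4) % 2 = 0 from by omega,
      show (8*u+6) / 2 = 4*u+3 from by omega, show (8*u+4) / 2 = 4*u+2 from by omega]
    simp only [Nat.choose_self, Nat.choose_zero_right, Nat.choose_one_right, one_mul]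
    rw [choose_mod_two (4*u+3) (4*u+2),
      show (4*u+3) % 2 = 1 from by omega, show (4*u+2) % 2 = 0 from by omega,
      show (4*u+3) / 2 = 2*u+1 from by omega, show (4*u+2) / 2 = 2*u+1 from by omega]
    simp only [Nat.choose_self, Nat.choose_zero_right, Nat.choose_one_right, one_mul]
    all_goals simp
  have h6 : (8*u+7).choose (8*u+4) % 2 = 1 := by
    rw [choose_mod_two (8*u+7) (8*u+4),
      show (8*u+7) % 2 = 1 from by omega, show (8*u+4) % 2 = 0 from by omega,
      show (8*u+7) / 2 = 4*u+3 from by omega, show (8*u+4) / 2 = 4*u+2 from by omega]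
    simp only [Nat.choose_self, Nat.choose_zero_right, Nat.choose_one_right, one_mul]
    rw [choose_mod_two (4*u+3) (4*u+2),
      show (4*u+3) % 2 = 1 from by omega, show (4*u+2) % 2 = 0 from by omega,
      show (4*u+3) / 2 = 2*u+1 from by omega, show (4*u+2) / 2 = 2*u+1 from by omega]
    simp only [Nat.choose_self, Nat.choose_zero_right, Nat.choose_one_right, one_mul]
    all_goals simp
  have h7 : (8*u+8).choose (8*u+4) % 2 = 0 := by
    rw [choose_mod_two (8*u+8) (8*u+4),
      show (8*u+8) % 2 = 0 from by omega, show (8*u+4) % 2 = 0 from by omega,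
      show (8*u+8) / 2 = 4*u+4 from by omega, show (8*u+4) / 2 = 4*u+2 from by omega]
    simp only [Nat.choose_self, Nat.choose_zero_right, Nat.choose_one_right, one_mul]
    rw [choose_mod_two (4*u+4) (4*u+2),
      show (4*u+4) % 2 = 0 from by omega, show (4*u+2) % 2 = 0 from by omega,
      show (4*u+4) / 2 = 2*u+2 from by omega, show (4*u+2) / 2 = 2*u+1 from by omega]
    simp only [Nat.choose_self, Nat.choose_zero_right, Nat.choose_one_right, one_mul]
    rw [choose_mod_two (2*u+2) (2*u+1),
      show (2*u+2) % 2 = 0 from by omega, show (2*u+1) % 2 = 1 from by omega,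
      show (2*u+2) / 2 = u+1 from by omega, show (2*u+1) / 2 = u from by omega]
    simp only [Nat.choose_self, Nat.choose_zero_right, Nat.choose_one_right, one_mul]
    all_goals simp [Nat.choose]
  have hL : L.natDegree < 4*u+4 := by omega
  have hFdeg : f.natDegree < 8*u+9 := by omega
  have key : ∀ k, (∑ e ∈ Finset.range (4*u+4), L.coeff e * ((X*(X+C α))^e).coeff k)
      = (∑ e ∈ Finset.range (8*u+9), f.coeff e * ((X + C α)^e).coeff k) + f.coeff k := by
    intro k
    have h := congrArg (fun p : (GaloisField 2 n)[X] => p.coeff k) hcomp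
    simp only [Polynomial.coeff_add] at h
    rw [coeff_comp_eq_sum L _ hL k, coeff_comp_eq_sum f _ hFdeg k] at h
    exact h
  have htwo2 : (2 : GaloisField 2 n) = 0 := by
    have := htwo; push_cast at this; exact this
  have LA : (∑ e ∈ Finset.range (4*u+4), L.coeff e * ((X*(X+C α))^e).coeff (8*u+6))
      = L.coeff (4*u+3) := by
    rw [Finset.sum_eq_single (4*u+3)]
    · rw [coeff_q_pow, if_pos (by omega), show 8*u+6 - (4*u+3) = 4*u+3 from by omega,
        Nat.sub_self, Nat.choose_self]
      simp
    · intro e he hne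
      simp only [Finset.mem_range] at he
      rw [coeff_q_pow, if_pos (by omega), Nat.choose_eq_zero_of_lt (by omega)]
      simp
    · intro h; exact absurd (Finset.mem_range.mpr (by omega)) h
  have LB : (∑ e ∈ Finset.range (4*u+4), L.coeff e * ((X*(X+C α))^e).coeff (8*u+4))
      = L.coeff (4*u+2) + L.coeff (4*u+3) * α^2 := by
    rw [show 4*u+4 = (4*u+2)+2 from by omega, sum_range_add_two]
    have z : ∑ e ∈ Finset.range (4*u+2), L.coeff e * ((X*(X+C α))^e).coeff (8*u+4) = 0 := by
      apply Finset.sum_eq_zero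
      intro e he
      simp only [Finset.mem_range] at he
      rw [coeff_q_pow, if_pos (by omega), Nat.choose_eq_zero_of_lt (by omega)]
      simp
    rw [z, zero_add, show 4*u+2+1 = 4*u+3 from by omega, coeff_q_pow, coeff_q_pow,
      if_pos (by omega), if_pos (by omega),
      show 8*u+4 - (4*u+2) = 4*u+2 from by omega, show 8*u+4 - (4*u+3) = 4*u+1 from by omega,
      Nat.sub_self, Nat.choose_self, show 4*u+3 - (4*u+1) = 2 from by omega,
      cast_eq_mod_two ((4*u+3).choose (4*u+1)), h3]
    simp
  have RA : (∑ e ∈ Finset.range (8*u+9), f.coeff e * ((X + C α)^e).coeff (8*u+6))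
      = f.coeff (8*u+6) + f.coeff (8*u+7) * α := by
    rw [show 8*u+9 = (8*u+6)+3 from by omega, sum_range_add_three]
    have z : ∑ e ∈ Finset.range (8*u+6), f.coeff e * ((X + C α)^e).coeff (8*u+6) = 0 := by
      apply Finset.sum_eq_zero
      intro e he
      simp only [Finset.mem_range] at he
      rw [Polynomial.coeff_X_add_C_pow, Nat.choose_eq_zero_of_lt (by omega)]
      simp
    rw [z, zero_add, show 8*u+6+1 = 8*u+7 from by omega, show 8*u+6+2 = 8*u+8 from by omega,
      Polynomial.coeff_X_add_C_pow, Polynomial.coeff_X_add_C_pow, Polynomial.coeff_X_add_C_pow,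
      Nat.sub_self, Nat.choose_self, show 8*u+7 - (8*u+6) = 1 from by omega,
      show 8*u+8 - (8*u+6) = 2 from by omega,
      cast_eq_mod_two ((8*u+7).choose (8*u+6)), h1,
      cast_eq_mod_two ((8*u+8).choose (8*u+6)), h2]
    simp
  have RB : (∑ e ∈ Finset.range (8*u+9), f.coeff e * ((X + C α)^e).coeff (8*u+4))
      = f.coeff (8*u+4) + f.coeff (8*u+5) * α + f.coeff (8*u+6) * α^2
        + f.coeff (8*u+7) * α^3 := by
    rw [show 8*u+9 = (8*u+4)+5 from by omega, sum_range_add_five]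
    have z : ∑ e ∈ Finset.range (8*u+4), f.coeff e * ((X + C α)^e).coeff (8*u+4) = 0 := by
      apply Finset.sum_eq_zero
      intro e he
      simp only [Finset.mem_range] at he
      rw [Polynomial.coeff_X_add_C_pow, Nat.choose_eq_zero_of_lt (by omega)]
      simp
    rw [z, zero_add, show 8*u+4+1 = 8*u+5 from by omega, show 8*u+4+2 = 8*u+6 from by omega,
      show 8*u+4+3 = 8*u+7 from by omega, show 8*u+4+4 = 8*u+8 from by omega,
      Polynomial.coeff_X_add_C_pow, Polynomial.coeff_X_add_C_pow,
      Polynomial.coeff_X_add_C_pow, Polynomial.coeff_X_add_C_pow,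
      Polynomial.coeff_X_add_C_pow,
      Nat.sub_self, Nat.choose_self, show 8*u+5 - (8*u+4) = 1 from by omega,
      show 8*u+6 - (8*u+4) = 2 from by omega, show 8*u+7 - (8*u+4) = 3 from by omega,
      show 8*u+8 - (8*u+4) = 4 from by omega,
      cast_eq_mod_two ((8*u+5).choose (8*u+4)), h4,
      cast_eq_mod_two ((8*u+6).choose (8*u+4)), h5,
      cast_eq_mod_two ((8*u+7).choose (8*u+4)), h6,
      cast_eq_mod_two ((8*u+8).choose (8*u+4)), h7]
    simp
  have E1 : L.coeff (4*u+3) = f.coeff (8*u+7) * α := by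
    have h := key (8*u+6)
    rw [LA, RA] at h
    linear_combination h + f.coeff (8*u+6) * htwo2
  have E2 : L.coeff (4*u+2) = f.coeff (8*u+6) * α^2 + f.coeff (8*u+5) * α := by
    have h := key (8*u+4)
    rw [LB, RB] at h
    linear_combination h - α^2 * E1 + f.coeff (8*u+4) * htwo2
  rw [show 8*u+8-1 = 8*u+7 from by omega, show 8*u+8-2 = 8*u+6 from by omega,
    show 8*u+8-3 = 8*u+5 from by omega, show 4*u+3-1 = 4*u+2 from by omega]
  exact ⟨E1, E2⟩
end

section
/- Let q = 2^n, let m ≡ 4 (mod 8) with m ≥ 8 divisible by 4, and let f = Σ_{k=0}^m a_{m-k} x^k ∈ 𝔽_q[x] have degree m with a_1 ≠ 0. Write L_α f = Σ_{k=0}^d b_{d-k} x^k with d = (m-2)/2. Then b_0 = a_1 α and b_1 = a_0 α⁴ + a_1 α³ + a_2 α² + a_3 α. -/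
open Polynomial

lemma coeff_comp_eq {R : Type*} [CommSemiring R] (p q : R[X]) {B : ℕ}
    (h : p.natDegree < B) (N : ℕ) :
    (p.comp q).coeff N = ∑ i ∈ Finset.range B, p.coeff i * (q ^ i).coeff N := by
  show (eval₂ C q p).coeff N = _
  rw [eval₂_eq_sum_range' C h q, finset_sum_coeff]
  simp [coeff_C_mul]

lemma lucas2 (a b : ℕ) :
    Nat.choose a b % 2 = (Nat.choose (a % 2) (b % 2) * Nat.choose (a / 2) (b / 2)) % 2 :=
  @Choose.choose_modEq_choose_mod_mul_choose_div_nat a b 2 ⟨Nat.prime_two⟩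

lemma natCast_mod2 {R : Type*} [Semiring R] [CharP R 2] (x : ℕ) :
    ((x : ℕ) : R) = ((x % 2 : ℕ) : R) := by
  have h2 : (2 : R) = 0 := by exact_mod_cast CharP.cast_eq_zero R 2
  conv_lhs => rw [← Nat.mod_add_div x 2]
  push_cast
  rw [h2, zero_mul, add_zero]

theorem Lalpha_top_coeffs_mod4 (n m : ℕ) (hn : 0 < n) (hm : 8 ≤ m) (hm8 : m % 8 = 4)
    (f : Polynomial (GaloisField 2 n)) (hf : f.natDegree = m)
    (ha1 : f.coeff (m - 1) ≠ 0)
    (α : GaloisField 2 n) (hα : α ≠ 0)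
    (d : ℕ) (hd : d = (m - 2) / 2)
    (L : Polynomial (GaloisField 2 n)) (hdeg : L.natDegree ≤ d)
    (hcomp : L.comp (X * (X + C α)) = f.comp (X + C α) + f) :
    L.coeff d = f.coeff (m - 1) * α ∧
      L.coeff (d - 1) = f.coeff m * α ^ 4 + f.coeff (m - 1) * α ^ 3 +
        f.coeff (m - 2) * α ^ 2 + f.coeff (m - 3) * α := by
  obtain ⟨j, rfl⟩ : ∃ j, m = 8 * j + 4 := ⟨m / 8, by omega⟩
  have hj : 1 ≤ j := by omega
  have hd' : d = 4 * j + 1 := by omega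
  subst hd'
  have cast1 : ∀ x : ℕ, x % 2 = 1 → ((x : ℕ) : GaloisField 2 n) = 1 := by
    intro x hx; rw [natCast_mod2, hx]; exact Nat.cast_one
  have cast0 : ∀ x : ℕ, x % 2 = 0 → ((x : ℕ) : GaloisField 2 n) = 0 := by
    intro x hx; rw [natCast_mod2, hx]; exact Nat.cast_zero
  have add_self : ∀ a : GaloisField 2 n, a + a = 0 := by
    intro a
    have h2 : (2 : GaloisField 2 n) = 0 := by exact_mod_cast CharP.cast_eq_zero (GaloisField 2 n) 2
    rw [← two_mul, h2, zero_mul]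
  -- parities
  have q1 : Nat.choose (4 * j + 1) (4 * j) % 2 = 1 := by
    rw [Nat.choose_succ_self_right]; omega
  have q2 : Nat.choose (4 * j + 2) (4 * j) % 2 = 1 := by
    rw [lucas2, show (4 * j + 2) % 2 = 0 from by omega, show (4 * j) % 2 = 0 from by omega,
      show (4 * j + 2) / 2 = 2 * j + 1 from by omega, show (4 * j) / 2 = 2 * j from by omega,
      Nat.choose_self, one_mul, Nat.choose_succ_self_right]
    omega
  have P1 : Nat.choose (8 * j + 3) (8 * j + 2) % 2 = 1 := by
    rw [show 8 * j + 3 = 8 * j + 2 + 1 from by omega, Nat.choose_succ_self_right]; omega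
  have P2 : Nat.choose (8 * j + 4) (8 * j + 2) % 2 = 0 := by
    rw [lucas2, show (8 * j + 4) % 2 = 0 from by omega, show (8 * j + 2) % 2 = 0 from by omega,
      show (8 * j + 4) / 2 = 4 * j + 2 from by omega, show (8 * j + 2) / 2 = 4 * j + 1 from by omega,
      Nat.choose_self, one_mul, lucas2, show (4 * j + 2) % 2 = 0 from by omega,
      show (4 * j + 1) % 2 = 1 from by omega]
    simp
  have P3 : Nat.choose (8 * j + 1) (8 * j) % 2 = 1 := by
    rw [Nat.choose_succ_self_right]; omega
  have P4 : Nat.choose (8 * j + 2) (8 * j) % 2 = 1 := by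
    rw [lucas2, show (8 * j + 2) % 2 = 0 from by omega, show (8 * j) % 2 = 0 from by omega,
      show (8 * j + 2) / 2 = 4 * j + 1 from by omega, show (8 * j) / 2 = 4 * j from by omega,
      Nat.choose_self, one_mul]
    exact q1
  have P5 : Nat.choose (8 * j + 3) (8 * j) % 2 = 1 := by
    rw [lucas2, show (8 * j + 3) % 2 = 1 from by omega, show (8 * j) % 2 = 0 from by omega,
      show (8 * j + 3) / 2 = 4 * j + 1 from by omega, show (8 * j) / 2 = 4 * j from by omega,
      Nat.choose_zero_right, one_mul]
    exact q1
  have P6 : Nat.choose (8 * j + 4) (8 * j) % 2 = 1 := by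
    rw [lucas2, show (8 * j + 4) % 2 = 0 from by omega, show (8 * j) % 2 = 0 from by omega,
      show (8 * j + 4) / 2 = 4 * j + 2 from by omega, show (8 * j) / 2 = 4 * j from by omega,
      Nat.choose_self, one_mul]
    exact q2
  have P7 : Nat.choose (4 * j + 1) (4 * j - 1) % 2 = 0 := by
    rw [lucas2, show (4 * j + 1) % 2 = 1 from by omega, show (4 * j - 1) % 2 = 1 from by omega,
      show (4 * j + 1) / 2 = 2 * j from by omega, show (4 * j - 1) / 2 = 2 * j - 1 from by omega,
      Nat.choose_self, one_mul, lucas2, show (2 * j) % 2 = 0 from by omega,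
      show (2 * j - 1) % 2 = 1 from by omega]
    simp
  -- casts
  have C1 : ((Nat.choose (8 * j + 3) (8 * j + 2) : ℕ) : GaloisField 2 n) = 1 := cast1 _ P1
  have C2 : ((Nat.choose (8 * j + 4) (8 * j + 2) : ℕ) : GaloisField 2 n) = 0 := cast0 _ P2
  have C3 : ((Nat.choose (8 * j + 1) (8 * j) : ℕ) : GaloisField 2 n) = 1 := cast1 _ P3
  have C4 : ((Nat.choose (8 * j + 2) (8 * j) : ℕ) : GaloisField 2 n) = 1 := cast1 _ P4
  have C5 : ((Nat.choose (8 * j + 3) (8 * j) : ℕ) : GaloisField 2 n) = 1 := cast1 _ P5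
  have C6 : ((Nat.choose (8 * j + 4) (8 * j) : ℕ) : GaloisField 2 n) = 1 := cast1 _ P6
  have C7 : ((Nat.choose (4 * j + 1) (4 * j - 1) : ℕ) : GaloisField 2 n) = 0 := cast0 _ P7
  have hLd : L.natDegree < 4 * j + 1 + 1 := by omega
  have hfd : f.natDegree < 8 * j + 4 + 1 := by omega
  have hterm : ∀ i N : ℕ, i ≤ N →
      ((X * (X + C α)) ^ i).coeff N = α ^ (i - (N - i)) * (Nat.choose i (N - i) : GaloisField 2 n) := by
    intro i N h
    rw [mul_pow, coeff_X_pow_mul', if_pos h, coeff_X_add_C_pow]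
  have rng : ∀ a b : ℕ, a = b → Finset.range a = Finset.range b := fun a b h => by rw [h]
  have key : ∀ N : ℕ,
      (∑ i ∈ Finset.range (4 * j + 1 + 1), L.coeff i * ((X * (X + C α)) ^ i).coeff N) =
      (∑ k ∈ Finset.range (8 * j + 4 + 1), f.coeff k * ((X + C α) ^ k).coeff N) + f.coeff N := by
    intro N
    have h1 := congrArg (fun p : (GaloisField 2 n)[X] => p.coeff N) hcomp
    simp only [coeff_add] at h1
    rw [coeff_comp_eq L (X * (X + C α)) hLd N, coeff_comp_eq f (X + C α) hfd N] at h1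
    exact h1
  -- first coefficient
  have L1 : (∑ i ∈ Finset.range (4 * j + 1 + 1), L.coeff i * ((X * (X + C α)) ^ i).coeff (8 * j + 2))
      = L.coeff (4 * j + 1) := by
    rw [Finset.sum_range_succ]
    have hz : ∑ i ∈ Finset.range (4 * j + 1), L.coeff i * ((X * (X + C α)) ^ i).coeff (8 * j + 2) = 0 := by
      apply Finset.sum_eq_zero
      intro i hi
      simp only [Finset.mem_range] at hi
      rw [hterm i _ (by omega), Nat.choose_eq_zero_of_lt (by omega : i < 8 * j + 2 - i)]
      simp
    rw [hz, zero_add, hterm _ _ (by omega), show 8 * j + 2 - (4 * j + 1) = 4 * j + 1 from by omega,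
      Nat.choose_self, Nat.sub_self]
    simp
  have R1 : (∑ k ∈ Finset.range (8 * j + 4 + 1), f.coeff k * ((X + C α) ^ k).coeff (8 * j + 2))
      = f.coeff (8 * j + 3) * α + f.coeff (8 * j + 2) := by
    rw [Finset.sum_range_succ, rng (8 * j + 4) (8 * j + 3 + 1) (by omega), Finset.sum_range_succ,
      rng (8 * j + 3) (8 * j + 2 + 1) (by omega), Finset.sum_range_succ]
    have hz : ∑ k ∈ Finset.range (8 * j + 2), f.coeff k * ((X + C α) ^ k).coeff (8 * j + 2) = 0 := by
      apply Finset.sum_eq_zero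
      intro k hk
      simp only [Finset.mem_range] at hk
      rw [coeff_X_add_C_pow, Nat.choose_eq_zero_of_lt (by omega : k < 8 * j + 2)]
      simp
    rw [hz, zero_add, coeff_X_add_C_pow, coeff_X_add_C_pow, coeff_X_add_C_pow,
      Nat.sub_self, Nat.choose_self, show 8 * j + 3 - (8 * j + 2) = 1 from by omega,
      show 8 * j + 4 - (8 * j + 2) = 2 from by omega, C1, C2]
    simp
    ring
  have L2 : (∑ i ∈ Finset.range (4 * j + 1 + 1), L.coeff i * ((X * (X + C α)) ^ i).coeff (8 * j))
      = L.coeff (4 * j) := by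
    rw [Finset.sum_range_succ, Finset.sum_range_succ]
    have hz : ∑ i ∈ Finset.range (4 * j), L.coeff i * ((X * (X + C α)) ^ i).coeff (8 * j) = 0 := by
      apply Finset.sum_eq_zero
      intro i hi
      simp only [Finset.mem_range] at hi
      rw [hterm i _ (by omega), Nat.choose_eq_zero_of_lt (by omega : i < 8 * j - i)]
      simp
    rw [hz, zero_add, hterm (4 * j) _ (by omega), hterm (4 * j + 1) _ (by omega),
      show 8 * j - 4 * j = 4 * j from by omega, Nat.choose_self, Nat.sub_self,
      show 8 * j - (4 * j + 1) = 4 * j - 1 from by omega, C7]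
    simp
  have R2 : (∑ k ∈ Finset.range (8 * j + 4 + 1), f.coeff k * ((X + C α) ^ k).coeff (8 * j))
      = f.coeff (8 * j + 4) * α ^ 4 + f.coeff (8 * j + 3) * α ^ 3 + f.coeff (8 * j + 2) * α ^ 2
        + f.coeff (8 * j + 1) * α + f.coeff (8 * j) := by
    rw [Finset.sum_range_succ, rng (8 * j + 4) (8 * j + 3 + 1) (by omega), Finset.sum_range_succ,
      rng (8 * j + 3) (8 * j + 2 + 1) (by omega), Finset.sum_range_succ,
      rng (8 * j + 2) (8 * j + 1 + 1) (by omega), Finset.sum_range_succ, Finset.sum_range_succ]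
    have hz : ∑ k ∈ Finset.range (8 * j), f.coeff k * ((X + C α) ^ k).coeff (8 * j) = 0 := by
      apply Finset.sum_eq_zero
      intro k hk
      simp only [Finset.mem_range] at hk
      rw [coeff_X_add_C_pow, Nat.choose_eq_zero_of_lt (by omega : k < 8 * j)]
      simp
    rw [hz, zero_add, coeff_X_add_C_pow, coeff_X_add_C_pow, coeff_X_add_C_pow,
      coeff_X_add_C_pow, coeff_X_add_C_pow,
      Nat.sub_self, Nat.choose_self,
      show 8 * j + 1 - 8 * j = 1 from by omega, show 8 * j + 2 - 8 * j = 2 from by omega,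
      show 8 * j + 3 - 8 * j = 3 from by omega, show 8 * j + 4 - 8 * j = 4 from by omega,
      C3, C4, C5, C6]
    simp
    ring
  have E1 := key (8 * j + 2)
  rw [L1, R1] at E1
  have E2 := key (8 * j)
  rw [L2, R2] at E2
  constructor
  · rw [show 8 * j + 4 - 1 = 8 * j + 3 from by omega, E1]
    linear_combination add_self (f.coeff (8 * j + 2))
  · rw [show 4 * j + 1 - 1 = 4 * j from by omega, show 8 * j + 4 - 1 = 8 * j + 3 from by omega,
      show 8 * j + 4 - 2 = 8 * j + 2 from by omega, show 8 * j + 4 - 3 = 8 * j + 1 from by omega,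
      E2]
    linear_combination add_self (f.coeff (8 * j))
end

section
/- Let q = 2^n, m ≡ 0 (mod 4) with m ≥ 8, d = (m-2)/2, f ∈ 𝔽_q[x] of degree m with nonzero coefficient of x^(m-1), and α ∈ 𝔽_q*. Then (L_α f)' has (d-1)/2 distinct roots in an algebraic closure of 𝔽_2 if and only if (D_α f)' has d-1 distinct roots there. -/
open Polynomial

/-!
In characteristic two, `T_α z = z * (z + α)` is additive with kernel `{0, α}`, and over an
algebraically closed field it is surjective, so every set has a `T_α`-preimage of exactly twice
its size. Since `T_α' = α`, the chain rule applied to `D_α f = (L_α f) ∘ T_α` shows that the roots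
of `(D_α f)'` are the `T_α`-preimage of the roots of `(L_α f)'`. Finally `m ≡ 0 (mod 4)` makes
`d` odd, so `d - 1 = 2 * ((d - 1) / 2)`.
-/

theorem AddMonoidHom.card_preimage_of_surjective {G H : Type*} [AddGroup G] [AddGroup H]
    (φ : G →+ H) (hφ : Function.Surjective φ) (S : Set H) :
    Nat.card (φ ⁻¹' S) = Nat.card φ.ker * Nat.card S := by
  let e := QuotientAddGroup.quotientKerEquivOfSurjective φ hφ
  have hpre : φ ⁻¹' S = QuotientAddGroup.mk ⁻¹' (e ⁻¹' S) := rfl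
  rw [hpre, Nat.card_congr (QuotientAddGroup.preimageMkEquivAddSubgroupProdSet _ _),
    Nat.card_prod, Nat.card_preimage_of_injective e.injective (by simp [e.surjective.range_eq])]

section CharacteristicTwo

variable {K : Type*} [CommRing K] [CharP K 2]

/-- The paper's map `T_β`. -/
def quadraticAddHom (β : K) : K →+ K where
  toFun z := z * (z + β)
  map_zero' := zero_mul _
  map_add' x y := by linear_combination (x * y) * CharTwo.two_eq_zero (R := K)

@[simp]
theorem quadraticAddHom_apply (β z : K) : quadraticAddHom β z = z * (z + β) := rfl

theorem coe_quadraticAddHom_ker [IsDomain K] (β : K) :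
    ((quadraticAddHom β).ker : Set K) = {0, β} := by
  ext z
  simp only [SetLike.mem_coe, AddMonoidHom.mem_ker, quadraticAddHom_apply, mul_eq_zero,
    Set.mem_insert_iff, Set.mem_singleton_iff, CharTwo.add_eq_zero]

theorem derivative_X_mul_X_add_C (a : K) : derivative (X * (X + C a)) = C a := by
  rw [derivative_mul, derivative_X, derivative_X_add_C, one_mul, mul_one]
  linear_combination (X : K[X]) * CharTwo.two_eq_zero (R := K[X])

end CharacteristicTwo

theorem quadraticAddHom_surjective {K : Type*} [Field K] [IsAlgClosed K] [CharP K 2] (β : K) :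
    Function.Surjective (quadraticAddHom β) := by
  intro τ
  have hdeg : (X ^ 2 + C β * X - C τ).degree = 2 := by compute_degree!
  obtain ⟨z, hz⟩ := IsAlgClosed.exists_root (X ^ 2 + C β * X - C τ) (by rw [hdeg]; decide)
  refine ⟨z, (quadraticAddHom_apply β z).trans ?_⟩
  simp only [IsRoot, eval_sub, eval_add, eval_pow, eval_mul, eval_C, eval_X] at hz
  linear_combination hz

theorem ncard_preimage_quadraticAddHom {K : Type*} [Field K] [IsAlgClosed K] [CharP K 2]
    {β : K} (hβ : β ≠ 0) (S : Set K) :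
    (quadraticAddHom β ⁻¹' S).ncard = 2 * S.ncard := by
  rw [← Nat.card_coe_set_eq, ← Nat.card_coe_set_eq,
    (quadraticAddHom β).card_preimage_of_surjective (quadraticAddHom_surjective β),
    ← SetLike.coe_sort_coe, coe_quadraticAddHom_ker, Nat.card_coe_set_eq, Set.ncard_pair hβ.symm]

theorem aeval_derivative_comp_X_mul_X_add_C_eq_zero_iff {K A : Type*} [Field K] [CharP K 2]
    [CommRing A] [IsDomain A] [Algebra K A] (p : K[X]) {a : K} (ha : a ≠ 0) (z : A) :
    aeval z (derivative (p.comp (X * (X + C a)))) = 0 ↔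
      aeval (z * (z + algebraMap K A a)) (derivative p) = 0 := by
  rw [derivative_comp, derivative_X_mul_X_add_C, map_mul, aeval_C, aeval_comp, mul_eq_zero,
    map_eq_zero_iff _ (algebraMap K A).injective, or_iff_right ha]
  simp

theorem roots_correspondence_general (n m : ℕ) (hm4 : m % 4 = 0)
    (d : ℕ) (hd : d = (m - 2) / 2)
    (f : Polynomial (GaloisField 2 n))
    (α : GaloisField 2 n) (hα : α ≠ 0)
    (L : Polynomial (GaloisField 2 n))
    (hcomp : L.comp (X * (X + C α)) = f.comp (X + C α) + f) :
    Set.ncard {z : AlgebraicClosure (GaloisField 2 n) |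
        aeval z (derivative L) = 0} = (d - 1) / 2 ↔
      Set.ncard {z : AlgebraicClosure (GaloisField 2 n) |
        aeval z (derivative (f.comp (X + C α) + f)) = 0} = d - 1 := by
  set β := algebraMap (GaloisField 2 n) (AlgebraicClosure (GaloisField 2 n)) α
  have hβ : β ≠ 0 := (_root_.map_ne_zero _).mpr hα
  have hroots : {z | aeval z (derivative (f.comp (X + C α) + f)) = 0} =
      quadraticAddHom β ⁻¹' {τ | aeval τ (derivative L) = 0} := by
    ext z
    rw [← hcomp]
    exact aeval_derivative_comp_X_mul_X_add_C_eq_zero_iff L hα z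
  rw [hroots, ncard_preimage_quadraticAddHom hβ]
  omega

theorem roots_correspondence (n m : ℕ) (hn : 0 < n) (hm : 8 ≤ m) (hm4 : m % 4 = 0)
    (d : ℕ) (hd : d = (m - 2) / 2)
    (f : Polynomial (GaloisField 2 n)) (hf : f.natDegree = m)
    (ha1 : f.coeff (m - 1) ≠ 0)
    (α : GaloisField 2 n) (hα : α ≠ 0)
    (L : Polynomial (GaloisField 2 n)) (hdeg : L.natDegree ≤ d)
    (hcomp : L.comp (X * (X + C α)) = f.comp (X + C α) + f) :
    Set.ncard {z : AlgebraicClosure (GaloisField 2 n) |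
        aeval z (derivative L) = 0} = (d - 1) / 2 ↔
      Set.ncard {z : AlgebraicClosure (GaloisField 2 n) |
        aeval z (derivative (f.comp (X + C α) + f)) = 0} = d - 1 :=
  roots_correspondence_general n m hm4 d hd f α hα L hcomp
end

section
/- Let m = 2^r(2^ℓ+1) with r ≥ 2, ℓ ≥ 1, let q = 2^n, and let α ∈ 𝔽_q be nonzero. Every root z (in an algebraic closure of 𝔽_2) of the polynomial x^(m-2) + (x+α)^(m-2) is nonzero and has the form z = α/(1+θ) for some (m/2 - 1)-th root of unity θ ≠ 1, and conversely every such z is a root. In particular x^(m-2)+(x+α)^(m-2) has exactly m/2 - 2 distinct roots counted as elements of the algebraic closure. -/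
/-!
In characteristic 2, squaring is injective, so `z ^ (2k) + (z + α) ^ (2k) = 0` iff
`z ^ k = (z + α) ^ k`. As `z = 0` is not a root, this says that `θ = (z + α) / z` is a `k`-th
root of unity, `θ ≠ 1` because `α ≠ 0`, and `z = α / (1 + θ)`. Since `θ ↦ α / (1 + θ)` is
injective and, for `k = m/2 - 1` odd, there are exactly `k` distinct `k`-th roots of unity in the
algebraic closure, there are `k - 1 = m/2 - 2` roots.
-/

open Polynomial

theorem div_right_injective₀ {G₀ : Type*} [GroupWithZero G₀] {a : G₀} (ha : a ≠ 0) :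
    Function.Injective (a / ·) :=
  fun x y h ↦ inv_injective (mul_left_cancel₀ ha (by simpa only [div_eq_mul_inv] using h))

namespace CharTwo

variable {K : Type*} [Field K] [CharP K 2]

theorem pow_two_mul_add_pow_two_mul_eq_zero_iff {x y : K} (k : ℕ) :
    x ^ (2 * k) + y ^ (2 * k) = 0 ↔ x ^ k = y ^ k := by
  rw [CharTwo.add_eq_zero, pow_mul', pow_mul', CharTwo.sq_inj]

theorem one_add_ne_zero {θ : K} (hθ : θ ≠ 1) : 1 + θ ≠ 0 :=
  fun h ↦ hθ (CharTwo.add_eq_zero.mp h).symm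

theorem add_eq_mul_iff_eq_div {a z θ : K} (hθ : θ ≠ 1) :
    z + a = z * θ ↔ z = a / (1 + θ) := by
  rw [eq_div_iff (one_add_ne_zero hθ)]
  constructor <;> intro h
  · linear_combination h + (z * θ - a) * CharTwo.two_eq_zero (R := K)
  · linear_combination h - (z * θ - a) * CharTwo.two_eq_zero (R := K)

theorem pow_two_mul_add_add_pow_two_mul_eq_zero_iff {a z : K} (ha : a ≠ 0) {k : ℕ}
    (hk : k ≠ 0) :
    z ^ (2 * k) + (z + a) ^ (2 * k) = 0 ↔
      z ≠ 0 ∧ ∃ θ : K, θ ^ k = 1 ∧ θ ≠ 1 ∧ z = a / (1 + θ) := by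
  rw [pow_two_mul_add_pow_two_mul_eq_zero_iff]
  constructor
  · intro h
    have hz : z ≠ 0 := by
      rintro rfl
      simp [zero_pow hk, eq_comm, ha] at h
    have hθ : (z + a) / z ≠ 1 := by rwa [Ne, div_eq_one_iff_eq hz, add_eq_left]
    refine ⟨hz, (z + a) / z, by rw [div_pow, ← h, div_self (pow_ne_zero k hz)], hθ, ?_⟩
    rw [← add_eq_mul_iff_eq_div hθ, mul_div_cancel₀ _ hz]
  · rintro ⟨-, θ, hθk, hθ, hz⟩
    rw [(add_eq_mul_iff_eq_div hθ).mpr hz, mul_pow, hθk, mul_one]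

theorem setOf_pow_two_mul_add_add_pow_two_mul_eq_zero [DecidableEq K] {a : K} (ha : a ≠ 0)
    {k : ℕ} (hk : k ≠ 0) :
    {z : K | z ^ (2 * k) + (z + a) ^ (2 * k) = 0} =
      (fun θ ↦ a / (1 + θ)) '' ↑((nthRootsFinset k (1 : K)).erase 1) := by
  ext z
  simp only [Set.mem_ofPred_eq, pow_two_mul_add_add_pow_two_mul_eq_zero_iff ha hk,
    Set.mem_image, Finset.coe_erase, Set.mem_sdiff, Finset.mem_coe,
    mem_nthRootsFinset (Nat.pos_of_ne_zero hk), Set.mem_singleton_iff]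
  constructor
  · rintro ⟨-, θ, hθk, hθ, rfl⟩
    exact ⟨θ, ⟨hθk, hθ⟩, rfl⟩
  · rintro ⟨θ, ⟨hθk, hθ⟩, rfl⟩
    exact ⟨div_ne_zero ha (one_add_ne_zero hθ), θ, hθk, hθ, rfl⟩

theorem ncard_setOf_pow_two_mul_add_add_pow_two_mul_eq_zero [IsAlgClosed K] {a : K}
    (ha : a ≠ 0) {k : ℕ} (hk : Odd k) :
    {z : K | z ^ (2 * k) + (z + a) ^ (2 * k) = 0}.ncard = k - 1 := by
  classical
  have : NeZero (k : K) := ⟨by rw [Ne, CharP.cast_eq_zero_iff K 2]; exact hk.not_two_dvd_nat⟩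
  obtain ⟨ζ, hζ⟩ := HasEnoughRootsOfUnity.exists_primitiveRoot K k
  have hinj : Function.Injective fun θ : K ↦ a / (1 + θ) :=
    (div_right_injective₀ ha).comp (add_right_injective 1)
  rw [setOf_pow_two_mul_add_add_pow_two_mul_eq_zero ha hk.pos.ne',
    Set.ncard_image_of_injective _ hinj, Set.ncard_coe_finset,
    Finset.card_erase_of_mem (one_mem_nthRootsFinset hk.pos),
    hζ.card_nthRootsFinset]

end CharTwo

theorem roots_of_Dalpha_monomial_general (n r ℓ : ℕ) (hr : 2 ≤ r)
    (m : ℕ) (hm : m = 2 ^ r * (2 ^ ℓ + 1))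
    (α : GaloisField 2 n) (hα : α ≠ 0) :
    (∀ z : AlgebraicClosure (GaloisField 2 n),
        z ^ (m - 2) + (z + algebraMap (GaloisField 2 n)
            (AlgebraicClosure (GaloisField 2 n)) α) ^ (m - 2) = 0 ↔
          (z ≠ 0 ∧ ∃ θ : AlgebraicClosure (GaloisField 2 n),
            θ ^ (m / 2 - 1) = 1 ∧ θ ≠ 1 ∧
              z = algebraMap (GaloisField 2 n)
                (AlgebraicClosure (GaloisField 2 n)) α / (1 + θ))) ∧
      Set.ncard {z : AlgebraicClosure (GaloisField 2 n) |
          z ^ (m - 2) + (z + algebraMap (GaloisField 2 n)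
            (AlgebraicClosure (GaloisField 2 n)) α) ^ (m - 2) = 0} =
        m / 2 - 2 := by
  have h4 : 4 ∣ m := hm ▸ (pow_dvd_pow 2 hr).mul_right _
  have hm0 : m ≠ 0 := hm ▸ by positivity
  have hmk : m - 2 = 2 * (m / 2 - 1) := by omega
  have hk : Odd (m / 2 - 1) := Nat.odd_iff.mpr (by omega)
  have hα' : algebraMap (GaloisField 2 n) (AlgebraicClosure (GaloisField 2 n)) α ≠ 0 :=
    (_root_.map_ne_zero _).mpr hα
  rw [hmk, CharTwo.ncard_setOf_pow_two_mul_add_add_pow_two_mul_eq_zero hα' hk]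
  exact ⟨fun z ↦ CharTwo.pow_two_mul_add_add_pow_two_mul_eq_zero_iff hα' hk.pos.ne', by omega⟩

theorem roots_of_Dalpha_monomial (n r ℓ : ℕ) (hn : 0 < n) (hr : 2 ≤ r) (hℓ : 1 ≤ ℓ)
    (m : ℕ) (hm : m = 2 ^ r * (2 ^ ℓ + 1))
    (α : GaloisField 2 n) (hα : α ≠ 0) :
    (∀ z : AlgebraicClosure (GaloisField 2 n),
        z ^ (m - 2) + (z + algebraMap (GaloisField 2 n)
            (AlgebraicClosure (GaloisField 2 n)) α) ^ (m - 2) = 0 ↔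
          (z ≠ 0 ∧ ∃ θ : AlgebraicClosure (GaloisField 2 n),
            θ ^ (m / 2 - 1) = 1 ∧ θ ≠ 1 ∧
              z = algebraMap (GaloisField 2 n)
                (AlgebraicClosure (GaloisField 2 n)) α / (1 + θ))) ∧
      Set.ncard {z : AlgebraicClosure (GaloisField 2 n) |
          z ^ (m - 2) + (z + algebraMap (GaloisField 2 n)
            (AlgebraicClosure (GaloisField 2 n)) α) ^ (m - 2) = 0} =
        m / 2 - 2 :=
  roots_of_Dalpha_monomial_general n r ℓ hr m hm α hα
end

section
/- Let m = 2^r(2^ℓ+1) with r ≥ 2, ℓ ≥ 1. Over 𝔽_2 (or any field of characteristic 2), L_1(x^(m-1)) = x^(2^r - 1) + (1 + Σ_{k=r}^{r+ℓ-1} x^(2^k)) · Σ_{k=0}^{r-1} x^(2^k - 1), i.e., the right-hand side composed with x(x+1) equals (x+1)^(m-1) + x^(m-1). -/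
open Polynomial

private lemma tele2 {R : Type*} [CommRing R] [CharP R 2] (f : ℕ → R) (a b : ℕ) :
    ∑ k ∈ Finset.Ico a (a + b), (f (k + 1) + f k) = f (a + b) + f a := by
  have h2 : (2 : R) = 0 := CharTwo.two_eq_zero
  induction b with
  | zero =>
    rw [Nat.add_zero, Finset.Ico_self, Finset.sum_empty]
    linear_combination (-(f a)) * h2
  | succ n ih =>
    rw [← Nat.add_assoc, Finset.sum_Ico_succ_top (by omega), ih]
    linear_combination f (a + n) * h2

theorem L1_monomial_formula (r ℓ : ℕ) (hr : 2 ≤ r) (hℓ : 1 ≤ ℓ)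
    (m : ℕ) (hm : m = 2 ^ r * (2 ^ ℓ + 1)) :
    (X ^ (2 ^ r - 1) +
        (1 + ∑ k ∈ Finset.Ico r (r + ℓ), X ^ 2 ^ k) *
          ∑ k ∈ Finset.range r, X ^ (2 ^ k - 1) : Polynomial (ZMod 2)).comp
        (X * (X + 1)) =
      (X + 1) ^ (m - 1) + X ^ (m - 1) := by
  have h2 : (2 : Polynomial (ZMod 2)) = 0 := CharTwo.two_eq_zero
  set y : Polynomial (ZMod 2) := X * (X + 1) with hydef
  -- y ≠ 0
  have hX1 : (X + 1 : Polynomial (ZMod 2)) ≠ 0 := by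
    intro h
    have := congrArg (eval 0) h
    simp at this
  have hyne : y ≠ 0 := mul_ne_zero X_ne_zero hX1
  apply mul_left_cancel₀ hyne
  -- Frobenius on y
  have hy : ∀ k : ℕ, y ^ 2 ^ k = X ^ 2 ^ (k + 1) + X ^ 2 ^ k := by
    intro k
    have e1 : y = X ^ 2 + X := by rw [hydef]; ring
    rw [e1, add_pow_char_pow (X ^ 2 : Polynomial (ZMod 2)) X 2 k, ← pow_mul]
    congr 1
    rw [pow_succ, Nat.mul_comm]
  -- y * y^(n-1) = y^n for n ≥ 1
  have hpow : ∀ n : ℕ, 1 ≤ n → y * y ^ (n - 1) = y ^ n := by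
    intro n hn
    rw [← pow_succ']
    congr 1
    omega
  -- telescoping sums
  have hS : (∑ k ∈ Finset.Ico r (r + ℓ), y ^ 2 ^ k)
      = X ^ 2 ^ (r + ℓ) + X ^ 2 ^ r := by
    rw [Finset.sum_congr rfl (fun k _ => hy k)]
    exact tele2 (fun k => X ^ 2 ^ k) r ℓ
  have hT : y * (∑ k ∈ Finset.range r, y ^ (2 ^ k - 1)) = X ^ 2 ^ r + X := by
    rw [Finset.mul_sum,
      Finset.sum_congr rfl (fun k _ => (hpow (2 ^ k) Nat.one_le_two_pow).trans (hy k))]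
    have := tele2 (fun k => (X : Polynomial (ZMod 2)) ^ 2 ^ k) 0 r
    simp only [Nat.zero_add, Finset.range_eq_Ico] at this ⊢
    rw [this, pow_zero, pow_one]
  -- comp computation
  have hcomp : ((X ^ (2 ^ r - 1) +
        (1 + ∑ k ∈ Finset.Ico r (r + ℓ), X ^ 2 ^ k) *
          ∑ k ∈ Finset.range r, X ^ (2 ^ k - 1) : Polynomial (ZMod 2)).comp y)
      = y ^ (2 ^ r - 1) +
        (1 + ∑ k ∈ Finset.Ico r (r + ℓ), y ^ 2 ^ k) *
          ∑ k ∈ Finset.range r, y ^ (2 ^ k - 1) := by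
    simp [Polynomial.comp, Polynomial.eval₂_finset_sum]
  rw [hcomp]
  -- m facts
  have hm' : m = 2 ^ (r + ℓ) + 2 ^ r := by rw [hm, pow_add]; ring
  have hm1 : 1 ≤ m := by
    rw [hm']
    exact Nat.one_le_two_pow.trans (Nat.le_add_right _ _)
  have hXm : (X : Polynomial (ZMod 2)) ^ m = X ^ 2 ^ (r + ℓ) * X ^ 2 ^ r := by
    rw [hm', pow_add]
  have hX1m : (X + 1 : Polynomial (ZMod 2)) ^ m
      = (X ^ 2 ^ (r + ℓ) + 1) * (X ^ 2 ^ r + 1) := by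
    rw [hm', pow_add, add_pow_char_pow (X : Polynomial (ZMod 2)) 1 2 (r + ℓ),
      add_pow_char_pow (X : Polynomial (ZMod 2)) 1 2 r, one_pow, one_pow]
  have hP : y * (X + 1) ^ (m - 1) = X * ((X ^ 2 ^ (r + ℓ) + 1) * (X ^ 2 ^ r + 1)) := by
    rw [← hX1m, hydef]
    rw [mul_assoc, ← pow_succ']
    congr 2
    omega
  have hQ : y * X ^ (m - 1) = (X + 1) * (X ^ 2 ^ (r + ℓ) * X ^ 2 ^ r) := by
    rw [← hXm, hydef]
    rw [mul_comm X (X + 1), mul_assoc, ← pow_succ']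
    congr 2
    omega
  have hB2 : (X : Polynomial (ZMod 2)) ^ 2 ^ (r + 1) = X ^ 2 ^ r * X ^ 2 ^ r := by
    rw [← pow_add]
    congr 1
    ring
  calc y * (y ^ (2 ^ r - 1) +
        (1 + ∑ k ∈ Finset.Ico r (r + ℓ), y ^ 2 ^ k) *
          ∑ k ∈ Finset.range r, y ^ (2 ^ k - 1))
      = y * y ^ (2 ^ r - 1) +
        (1 + ∑ k ∈ Finset.Ico r (r + ℓ), y ^ 2 ^ k) *
          (y * ∑ k ∈ Finset.range r, y ^ (2 ^ k - 1)) := by ring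
    _ = (X ^ 2 ^ (r + 1) + X ^ 2 ^ r) +
        (1 + (X ^ 2 ^ (r + ℓ) + X ^ 2 ^ r)) * (X ^ 2 ^ r + X) := by
        rw [hpow (2 ^ r) Nat.one_le_two_pow, hy r, hS, hT]
    _ = X * ((X ^ 2 ^ (r + ℓ) + 1) * (X ^ 2 ^ r + 1)) +
        (X + 1) * (X ^ 2 ^ (r + ℓ) * X ^ 2 ^ r) := by
        linear_combination hB2 + ((X : Polynomial (ZMod 2)) ^ 2 ^ r * X ^ 2 ^ r
          + X ^ 2 ^ r - X * X ^ 2 ^ (r + ℓ) * X ^ 2 ^ r) * h2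
    _ = y * ((X + 1) ^ (m - 1) + X ^ (m - 1)) := by linear_combination -hP - hQ
end

section
/- Let m = 2^r(2^ℓ+1) with r ≥ 2, ℓ ≥ 1, and let P_k(x) = x + x² + ... + x^(2^(k-1)) denote the k-th trace polynomial over 𝔽_2. Then x² · (L_1(x^(m-1)))' = P_r(x)² + P_ℓ(x)^(2^r) · P_{r-1}(x)², where ' denotes the formal derivative in characteristic 2. -/
open Polynomial

private lemma h2' : (2 : Polynomial (ZMod 2)) = 0 := by
  exact_mod_cast CharP.cast_eq_zero (Polynomial (ZMod 2)) 2

private lemma trace_comp (k : ℕ) :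
    (∑ s ∈ Finset.range k, (X : Polynomial (ZMod 2)) ^ 2 ^ s).comp (X * (X + 1))
      = X ^ 2 ^ k + X := by
  induction k with
  | zero =>
    simp only [Finset.range_zero, Finset.sum_empty, zero_comp, pow_zero, pow_one]
    linear_combination (-(X : Polynomial (ZMod 2))) * h2'
  | succ n ih =>
    rw [Finset.sum_range_succ, add_comp, ih, pow_comp, X_comp]
    have hx : (X * (X + 1) : Polynomial (ZMod 2)) = X ^ 2 + X := by ring
    have h : (X * (X + 1) : Polynomial (ZMod 2)) ^ 2 ^ n
        = X ^ 2 ^ (n + 1) + X ^ 2 ^ n := by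
      rw [hx, add_pow_char_pow, ← pow_mul]
      congr 2
      rw [pow_succ]
      ring
    rw [h]
    linear_combination ((X : Polynomial (ZMod 2)) ^ 2 ^ n) * h2'

theorem x_sq_mul_derivative_L1 (r ℓ : ℕ) (hr : 2 ≤ r) (hℓ : 1 ≤ ℓ)
    (m : ℕ) (hm : m = 2 ^ r * (2 ^ ℓ + 1))
    (L : Polynomial (ZMod 2)) (hdeg : L.natDegree ≤ (m - 2) / 2)
    (hcomp : L.comp (X * (X + 1)) = (X + 1) ^ (m - 1) + X ^ (m - 1)) :
    X ^ 2 * derivative L =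
      (∑ s ∈ Finset.range r, (X : Polynomial (ZMod 2)) ^ 2 ^ s) ^ 2 +
        (∑ s ∈ Finset.range ℓ, (X : Polynomial (ZMod 2)) ^ 2 ^ s) ^ 2 ^ r *
          (∑ s ∈ Finset.range (r - 1), (X : Polynomial (ZMod 2)) ^ 2 ^ s) ^ 2 := by
  have hm' : m = 2 ^ (r + ℓ) + 2 ^ r := by rw [hm, pow_add]; ring
  have h4r : 4 ≤ 2 ^ r := by
    calc (4:ℕ) = 2 ^ 2 := rfl
    _ ≤ 2 ^ r := Nat.pow_le_pow_right (by norm_num) hr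
  have hm4 : 4 ≤ m := le_trans h4r (by rw [hm']; exact Nat.le_add_left _ _)
  have hmeven : 2 ∣ m := by
    rw [hm]
    exact Dvd.dvd.mul_right (dvd_pow_self 2 (by omega)) _
  -- cast of m - 1 is 1
  have hm1 : ((m - 1 : ℕ) : ZMod 2) = 1 := by
    have h : (m - 1) % 2 = 1 := by omega
    rw [← ZMod.natCast_mod, h, Nat.cast_one]
  -- derivative of q = X * (X + 1) is 1
  have hdq : derivative (X * (X + 1) : Polynomial (ZMod 2)) = 1 := by
    simp only [derivative_mul, derivative_X, derivative_add, derivative_one, add_zero,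
      one_mul, mul_one]
    linear_combination (X : Polynomial (ZMod 2)) * h2'
  -- differentiate hcomp
  have hd := congrArg derivative hcomp
  rw [derivative_comp, hdq, one_mul] at hd
  simp only [derivative_add, derivative_pow, derivative_X, derivative_one, add_zero,
    mul_one, hm1, map_one, one_mul] at hd
  have hD : (derivative L).comp (X * (X + 1)) = (X + 1) ^ (m - 2) + X ^ (m - 2) := by
    rw [hd]; congr 2 <;> omega
  -- injectivity of composition with q
  have key : ∀ p₁ p₂ : Polynomial (ZMod 2),
      p₁.comp (X * (X + 1)) = p₂.comp (X * (X + 1)) → p₁ = p₂ := by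
    intro p₁ p₂ h
    have h0 : (p₁ - p₂).comp (X * (X + 1)) = 0 := by rw [sub_comp, h, sub_self]
    rcases comp_eq_zero_iff.mp h0 with h' | ⟨-, hq'⟩
    · exact sub_eq_zero.mp h'
    · exfalso
      have := congrArg (fun p => coeff p 2) hq'
      simp [coeff_C, mul_add, coeff_X_pow, coeff_X] at this
  apply key
  -- compute both compositions
  rw [mul_comp, pow_comp, X_comp, hD, add_comp, mul_comp, pow_comp, pow_comp, pow_comp,
    trace_comp, trace_comp, trace_comp]
  -- rewrite powers
  have e1 : (2:ℕ) ^ r = 2 ^ (r - 1) * 2 := by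
    rw [← pow_succ]; congr 1; omega
  have e2 : (2:ℕ) ^ ℓ * 2 ^ r = 2 ^ (r + ℓ) := by
    rw [← pow_add]; congr 1; omega
  have hfrob : ((X : Polynomial (ZMod 2)) ^ 2 ^ ℓ + X) ^ 2 ^ r
      = X ^ 2 ^ (r + ℓ) + X ^ 2 ^ r := by
    rw [add_pow_char_pow, ← pow_mul, e2]
  have hsplit : ((X * (X + 1) : Polynomial (ZMod 2))) ^ 2 * ((X + 1) ^ (m - 2) + X ^ (m - 2))
      = X ^ 2 * (X + 1) ^ m + X ^ m * (X + 1) ^ 2 := by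
    have h1 : ((X : Polynomial (ZMod 2)) + 1) ^ m = (X + 1) ^ 2 * (X + 1) ^ (m - 2) := by
      rw [← pow_add]; congr 1; omega
    have h2 : (X : Polynomial (ZMod 2)) ^ m = X ^ 2 * X ^ (m - 2) := by
      rw [← pow_add]; congr 1; omega
    rw [h1, h2]; ring
  have hXm : (X : Polynomial (ZMod 2)) ^ m = X ^ 2 ^ (r + ℓ) * X ^ 2 ^ r := by
    rw [hm', pow_add]
  have hX1m : ((X : Polynomial (ZMod 2)) + 1) ^ m
      = (X ^ 2 ^ (r + ℓ) + 1) * (X ^ 2 ^ r + 1) := by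
    rw [hm', pow_add, add_pow_char_pow, add_pow_char_pow, one_pow, one_pow]
  have hhalf : (X : Polynomial (ZMod 2)) ^ 2 ^ r = (X ^ 2 ^ (r - 1)) ^ 2 := by
    rw [← pow_mul, ← e1]
  rw [hsplit, hX1m, hXm, hfrob, hhalf]
  set a : Polynomial (ZMod 2) := X ^ 2 ^ (r - 1) with ha
  set b : Polynomial (ZMod 2) := X ^ 2 ^ (r + ℓ) with hb
  linear_combination (a^2*b*X^2 + a^2*b*X - a^4 - a^2*X - a*b*X - a^3*X) * h2'
end
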